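/- Let F be a free group, and let g, h be nontrivial cyclically reduced words in F with |g| ≥ |h|, translating in the same direction along a common line. If the axis of g and the axis of h share a common segment of length at least 2|g| (i.e., a segment of the axis of g of length 2|g| lies on the axis of h), then gh = hg. -/

import Mathlib

/-- A word is cyclically reduced iff it has minimal length in its conjugacy class. -/
def CyclicallyReduced {α : Type*} [DecidableEq α] (w : FreeGroup α) : Prop :=
  ∀ x : FreeGroup α, FreeGroup.norm w ≤ FreeGroup.norm (x⁻¹ * w * x)

/-- The axis of a cyclically reduced element `g`: the set of vertices of the Cayley graph
displaced by exactly `|g|` (in a tree this is the bi-infinite geodesic through the powers `gⁿ`). -/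
def axisSet {α : Type*} [DecidableEq α] (g : FreeGroup α) : Set (FreeGroup α) :=
  {x : FreeGroup α | FreeGroup.norm (x⁻¹ * g * x) = FreeGroup.norm g}

/-- `p` is a graphical prefix of `w` (no cancellation). -/
def IsGraphPrefix {α : Type*} [DecidableEq α] (p w : FreeGroup α) : Prop :=
  ∃ q : FreeGroup α, w = p * q ∧ FreeGroup.norm w = FreeGroup.norm p + FreeGroup.norm q

namespace StmtAux
open FreeGroup List

variable {α : Type*} [DecidableEq α]

/-- No-cancellation relation between adjacent letters. -/
def Rr (x y : α × Bool) : Prop := ¬(x.1 = y.1 ∧ x.2 = !y.2)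

lemma reduce_eq_self_of_chain : ∀ {l : List (α × Bool)}, l.Chain' Rr → FreeGroup.reduce l = l
  | [], _ => rfl
  | [x], _ => rfl
  | x :: y :: ys, hc => by
    have ih : FreeGroup.reduce (y :: ys) = y :: ys :=
      reduce_eq_self_of_chain hc.tail
    have hxy : Rr x y := List.isChain_cons_cons.1 hc |>.1
    rw [FreeGroup.reduce.cons, ih]
    simp only [Rr] at hxy
    simp [if_neg hxy]

lemma red_eq_of_length {l l' : List (α × Bool)} (h : Red l l') (hl : l'.length = l.length) :
    l' = l := by
  rcases Relation.ReflTransGen.cases_head h with heq | ⟨m, hstep, hred⟩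
  · exact heq.symm
  · have h1 := hstep.length
    have h2 := FreeGroup.Red.length_le hred
    omega

lemma chain_of_reduce_eq_self : ∀ {l : List (α × Bool)}, FreeGroup.reduce l = l → l.Chain' Rr
  | [], _ => List.isChain_nil
  | [x], _ => List.isChain_singleton x
  | x :: y :: ys, hr => by
    have hlen : (FreeGroup.reduce (y :: ys)).length ≤ (y :: ys).length :=
      FreeGroup.reduce.red.length_le
    rw [FreeGroup.reduce.cons] at hr
    rcases hred : FreeGroup.reduce (y :: ys) with _ | ⟨z, zs⟩
    · rw [hred] at hr; simp at hr
    · rw [hred] at hr hlen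
      dsimp only at hr
      by_cases hc : x.1 = z.1 ∧ x.2 = !z.2
      · rw [if_pos hc] at hr
        have := congrArg List.length hr
        simp at this hlen; omega
      · rw [if_neg hc] at hr
        obtain ⟨hzy, hzsys⟩ : z = y ∧ zs = ys := by
          injection hr with _ h2; injection h2 with a b; exact ⟨a, b⟩
        subst hzy; subst hzsys
        exact List.isChain_cons_cons.2 ⟨hc, chain_of_reduce_eq_self hred⟩


lemma norm_def (x : FreeGroup α) : FreeGroup.norm x = x.toWord.length := rfl

lemma toWord_mul_of_norm {x y : FreeGroup α}
    (h : FreeGroup.norm (x * y) = FreeGroup.norm x + FreeGroup.norm y) :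
    (x * y).toWord = x.toWord ++ y.toWord := by
  have hmk : x * y = FreeGroup.mk (x.toWord ++ y.toWord) := by
    rw [← FreeGroup.mul_mk, FreeGroup.mk_toWord, FreeGroup.mk_toWord]
  have hred : Red (x.toWord ++ y.toWord) (FreeGroup.reduce (x.toWord ++ y.toWord)) :=
    FreeGroup.reduce.red
  have hlen : (FreeGroup.reduce (x.toWord ++ y.toWord)).length
      = (x.toWord ++ y.toWord).length := by
    have : (x * y).toWord = FreeGroup.reduce (x.toWord ++ y.toWord) := by
      rw [hmk, FreeGroup.toWord_mk]
    rw [← this, List.length_append, ← norm_def, ← norm_def, ← norm_def, h]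
  rw [hmk, FreeGroup.toWord_mk, red_eq_of_length hred hlen]

lemma toWord_mul_of_chain {x y : FreeGroup α}
    (h : (x.toWord ++ y.toWord).Chain' Rr) :
    (x * y).toWord = x.toWord ++ y.toWord := by
  have hmk : x * y = FreeGroup.mk (x.toWord ++ y.toWord) := by
    rw [← FreeGroup.mul_mk, FreeGroup.mk_toWord, FreeGroup.mk_toWord]
  rw [hmk, FreeGroup.toWord_mk, reduce_eq_self_of_chain h]

lemma chain_toWord (x : FreeGroup α) : x.toWord.Chain' Rr :=
  chain_of_reduce_eq_self (FreeGroup.reduce_toWord x)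

/-- The junction condition: a nontrivial cyclically reduced word's last letter is not
the inverse of its first letter. -/
lemma crg_junction {g : FreeGroup α} (hg : g ≠ 1) (hcr : CyclicallyReduced g) :
    ∀ x ∈ g.toWord.getLast?, ∀ y ∈ g.toWord.head?, Rr x y := by
  intro x hx y hy hxy
  have hne : g.toWord ≠ [] := fun hn => hg (FreeGroup.toWord_eq_nil_iff.1 hn)
  obtain ⟨hd, t, hcons⟩ := List.exists_cons_of_ne_nil hne
  rcases List.eq_nil_or_concat g.toWord with hnil | ⟨init, last, hconcat⟩
  · exact hne hnil
  have hy' : y = hd := by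
    rw [hcons] at hy; simpa using hy.symm
  have hx' : x = last := by
    rw [hconcat] at hx; simpa using hx.symm
  rw [hx', hy'] at hxy
  have hlast : last = (hd.1, !hd.2) := Prod.ext hxy.1 hxy.2
  rcases init with _ | ⟨i0, init'⟩
  · -- g.toWord = [last] = [hd]
    rw [hconcat] at hcons
    simp only [List.concat_eq_append, List.nil_append] at hcons
    have : last = hd := (List.cons_eq_cons.1 hcons).1
    rw [hlast] at this
    have : hd.2 = !hd.2 := (congrArg Prod.snd this).symm
    simp at this
  · have hi0 : i0 = hd ∧ t = init' ++ [last] := by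
      rw [hconcat] at hcons
      simp only [List.concat_eq_append, List.cons_append] at hcons
      exact ⟨(List.cons_eq_cons.1 hcons).1, ((List.cons_eq_cons.1 hcons).2).symm⟩
    set xg : FreeGroup α := FreeGroup.mk [hd] with hxg
    have hxinv : xg⁻¹ = FreeGroup.mk [(hd.1, !hd.2)] := by
      rw [hxg, FreeGroup.inv_mk]; rfl
    have hconj : xg⁻¹ * g * xg = FreeGroup.mk ((hd.1, !hd.2) :: (g.toWord ++ [hd])) := by
      conv_lhs => rw [← FreeGroup.mk_toWord (x := g)]
      rw [hxinv, FreeGroup.mul_mk, FreeGroup.mul_mk]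
      rfl
    have hstep1 : FreeGroup.mk ((hd.1, !hd.2) :: (g.toWord ++ [hd]))
        = FreeGroup.mk (t ++ [hd]) := by
      have hs : Red.Step ([] ++ (hd.1, !hd.2) :: (hd.1, !(!hd.2)) :: (t ++ [hd]))
          ([] ++ (t ++ [hd])) := Red.Step.not
      rw [← FreeGroup.quot_mk_eq_mk, ← FreeGroup.quot_mk_eq_mk]
      apply Quot.sound
      simpa [hcons, Bool.not_not] using hs
    have hstep2 : FreeGroup.mk (t ++ [hd]) = FreeGroup.mk init' := by
      have hs : Red.Step (init' ++ (hd.1, !hd.2) :: (hd.1, !(!hd.2)) :: [])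
          (init' ++ []) := Red.Step.not
      rw [← FreeGroup.quot_mk_eq_mk, ← FreeGroup.quot_mk_eq_mk]
      apply Quot.sound
      have h2 : t ++ [hd] = init' ++ (hd.1, !hd.2) :: (hd.1, !(!hd.2)) :: [] := by
        rw [hi0.2, hlast]
        simp [Bool.not_not]
      rw [h2]
      simpa using hs
    have hnorm : FreeGroup.norm (xg⁻¹ * g * xg) ≤ init'.length := by
      rw [hconj, hstep1, hstep2]
      exact FreeGroup.norm_mk_le
    have hlt : init'.length + 2 = g.toWord.length := by
      rw [hcons, hi0.2]
      simp
    have := hcr xg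
    rw [norm_def g] at this
    omega

end StmtAux

open StmtAux

/-- Let `g, h` be nontrivial cyclically reduced words with `|g| ≥ |h|` translating in the
same direction along a common line (so that `h` lies on the segment `[1, g²]`).  If the
segment `[1, g²]` of the axis of `g` (of length `2|g|`) lies on the axis of `h`, then
`g h = h g`. -/
theorem stmt_2 {α : Type*} [DecidableEq α] (g h : FreeGroup α)
    (hg : g ≠ 1) (hh : h ≠ 1)
    (hcrg : CyclicallyReduced g) (hcrh : CyclicallyReduced h)
    (hlen : FreeGroup.norm h ≤ FreeGroup.norm g)
    (hseg : ∀ p : FreeGroup α, IsGraphPrefix p (g ^ 2) → p ∈ axisSet h)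
    (hdir : IsGraphPrefix h (g ^ 2)) :
    g * h = h * g := by
  set a := g.toWord with ha
  set b := h.toWord with hb
  have hna : a ≠ [] := fun hn => hg (FreeGroup.toWord_eq_nil_iff.1 hn)
  have hnb : b ≠ [] := fun hn => hh (FreeGroup.toWord_eq_nil_iff.1 hn)
  have chain_a : a.Chain' Rr := chain_toWord g
  have chain_b : b.Chain' Rr := chain_toWord h
  have ja := crg_junction hg hcrg
  have jb := crg_junction hh hcrh
  rw [← ha] at ja
  rw [← hb] at jb
  have hlen' : b.length ≤ a.length := hlen
  have chain_aa : (a ++ a).Chain' Rr :=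
    List.isChain_append.2 ⟨chain_a, chain_a, ja⟩
  have hg2 : (g ^ 2).toWord = a ++ a := by
    rw [pow_two]
    exact toWord_mul_of_chain chain_aa
  -- h is a graphical prefix of g²
  obtain ⟨q, hq, hnq⟩ := hdir
  have hbq : (g ^ 2).toWord = b ++ q.toWord := by
    rw [hq]
    exact toWord_mul_of_norm (by rw [← hq]; exact hnq)
  have haab : a ++ a = b ++ q.toWord := hg2.symm.trans hbq
  have hb_take_a : b = a.take b.length := by
    have h1 : (a ++ a).take b.length = b := by
      rw [haab]; exact List.take_left' rfl
    rw [List.take_append_of_le_length hlen'] at h1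
    exact h1.symm
  -- heads agree
  have hhead : a.head? = b.head? := by
    have h1 : (a ++ a).head? = (b ++ q.toWord).head? := by rw [haab]
    rwa [List.head?_append_of_ne_nil _ hna, List.head?_append_of_ne_nil _ hnb] at h1
  have chain_b_aa : (b ++ (a ++ a)).Chain' Rr := by
    refine List.isChain_append.2 ⟨chain_b, chain_aa, ?_⟩
    intro x hx y hy
    apply jb x hx
    rw [← hhead]
    rwa [List.head?_append_of_ne_nil _ hna] at hy
  have hhg2 : (h * g ^ 2).toWord = b ++ (a ++ a) := by
    have := toWord_mul_of_chain (x := h) (y := g ^ 2) (by rw [hg2]; exact chain_b_aa)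
    rwa [hg2] at this
  -- axis condition at p = g²
  have hax : FreeGroup.norm ((g ^ 2)⁻¹ * h * g ^ 2) = FreeGroup.norm h :=
    hseg (g ^ 2) ⟨1, by rw [mul_one], by simp⟩
  set c : FreeGroup α := (g ^ 2)⁻¹ * h * g ^ 2 with hc
  have hgc : h * g ^ 2 = g ^ 2 * c := by
    rw [hc]
    group
  have hcw_len : c.toWord.length = b.length := hax
  have hnorm_add : FreeGroup.norm (g ^ 2 * c)
      = FreeGroup.norm (g ^ 2) + FreeGroup.norm c := by
    rw [← hgc]
    have e1 : FreeGroup.norm (h * g ^ 2) = b.length + (a.length + a.length) := by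
      rw [norm_def, hhg2]; simp
    have e2 : FreeGroup.norm (g ^ 2) = a.length + a.length := by
      rw [norm_def, hg2]; simp
    rw [e1, e2, hax, norm_def, ← hb]
    omega
  have hcombine : b ++ (a ++ a) = (a ++ a) ++ c.toWord := by
    rw [← hhg2, hgc, toWord_mul_of_norm hnorm_add, hg2]
  -- take the first (|b| + |a|) letters of both sides
  have key : b ++ a = a ++ b := by
    have h1 := congrArg (List.take (b.length + a.length)) hcombine
    rw [List.take_length_add_append, List.take_left] at h1
    have h2 : (a ++ a ++ c.toWord).take (b.length + a.length)
        = a ++ a.take b.length := by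
      rw [List.take_append_of_le_length (by simp; omega)]
      rw [Nat.add_comm]
      have : a.length + b.length = a.length + b.length := rfl
      rw [show (a ++ a).take (a.length + b.length) = a ++ a.take b.length from
        List.take_length_add_append b.length]
    rw [h2, ← hb_take_a] at h1
    exact h1
  calc g * h = FreeGroup.mk a * FreeGroup.mk b := by rw [ha, hb, FreeGroup.mk_toWord, FreeGroup.mk_toWord]
    _ = FreeGroup.mk (a ++ b) := FreeGroup.mul_mk
    _ = FreeGroup.mk (b ++ a) := by rw [key]
    _ = FreeGroup.mk b * FreeGroup.mk a := FreeGroup.mul_mk.symm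
    _ = h * g := by rw [ha, hb, FreeGroup.mk_toWord, FreeGroup.mk_toWord]
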